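/- Let Γ ⊂ Homeo(M) be a non-elementary convergence group and (σ, σ̄, G) a κ-coarse Gromov–Patterson–Sullivan system. Then σ and σ̄ are expanding coarse-cocycles, and for any choices of magnitudes ‖·‖_σ and ‖·‖_{σ̄} there exists C > 0 such that ‖γ^{-1}‖_{σ̄} − C ≤ ‖γ‖_σ ≤ ‖γ^{-1}‖_{σ̄} + C for all γ ∈ Γ. -/

import Mathlib

open Filter Topology MeasureTheory Set

/-! Background definitions: convergence groups, coarse cocycles,
Patterson–Sullivan measures, following Blayac–Canary–Zhu–Zimmer. -/

/-- The group of self-homeomorphisms of a topological space,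
with `(f * g) x = f (g x)`. -/
instance homeomorphGroup {X : Type*} [TopologicalSpace X] : Group (X ≃ₜ X) where
  mul f g := g.trans f
  one := Homeomorph.refl X
  inv := Homeomorph.symm
  mul_assoc f g h := Homeomorph.ext fun _ => rfl
  one_mul f := Homeomorph.ext fun _ => rfl
  mul_one f := Homeomorph.ext fun _ => rfl
  inv_mul_cancel f := Homeomorph.ext fun x => f.symm_apply_apply x

/-- Locally uniform convergence of a sequence of maps to a constant map on a set `S`,
phrased purely topologically.  (For maps into a uniform space this is equivalent to
`TendstoLocallyUniformlyOn` with constant limit.) -/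
def TendstoLocallyUniformlyOnConst {X Y : Type*} [TopologicalSpace X] [TopologicalSpace Y]
    (F : ℕ → X → Y) (a : Y) (S : Set X) : Prop :=
  ∀ U ∈ nhds a, ∀ x ∈ S, ∃ V ∈ nhdsWithin x S, ∀ᶠ n in Filter.atTop, ∀ y ∈ V, F n y ∈ U

variable {M : Type*} [MetricSpace M] [CompactSpace M]

/-- `Γ` is a (discrete) convergence group: every sequence of pairwise distinct elements
has a subsequence converging to a constant map locally uniformly off a point. -/
def IsConvergenceGroup (Γ : Subgroup (M ≃ₜ M)) : Prop :=
  ∀ γ : ℕ → Γ, Function.Injective γ →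
    ∃ (a b : M) (φ : ℕ → ℕ), StrictMono φ ∧
      TendstoLocallyUniformlyOnConst (fun j x => (γ (φ j) : M ≃ₜ M) x) a {b}ᶜ

/-- The limit set of `Γ`. -/
def limitSet (Γ : Subgroup (M ≃ₜ M)) : Set M :=
  {a | ∃ (b : M) (γ : ℕ → Γ),
    TendstoLocallyUniformlyOnConst (fun n x => (γ n : M ≃ₜ M) x) a {b}ᶜ}

/-- `Γ` is non-elementary: its limit set has at least 3 points. -/
def IsNonElementary (Γ : Subgroup (M ≃ₜ M)) : Prop := 3 ≤ (limitSet Γ).encard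

/-- Conical limit points. -/
def IsConicalLimitPoint (Γ : Subgroup (M ≃ₜ M)) (x : M) : Prop :=
  ∃ (a b : M) (γ : ℕ → Γ), a ≠ b ∧
    Tendsto (fun n => (γ n : M ≃ₜ M) x) atTop (nhds a) ∧
    ∀ y : M, y ≠ x → Tendsto (fun n => (γ n : M ≃ₜ M) y) atTop (nhds b)

/-- The conical limit set `Λ^{con}(Γ)`. -/
def conicalLimitSet (Γ : Subgroup (M ≃ₜ M)) : Set M := {x | IsConicalLimitPoint Γ x}

/-- The natural action of `Γ` on `Γ ⊔ M`. -/
def sumAction (Γ : Subgroup (M ≃ₜ M)) (γ : Γ) : Γ ⊕ M → Γ ⊕ M :=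
  Sum.elim (fun α => Sum.inl (γ * α)) (fun x => Sum.inr ((γ : M ≃ₜ M) x))

/-- A compactifying topology on `Γ ⊔ M`: a compact metrizable topology for which the
inclusions of `Γ` (discrete) and `M` are embeddings and the natural `Γ`-action is a
convergence group action. -/
structure IsCompactifyingTopology (Γ : Subgroup (M ≃ₜ M))
    (t : TopologicalSpace (Γ ⊕ M)) : Prop where
  compact : @CompactSpace (Γ ⊕ M) t
  metrizable : @TopologicalSpace.MetrizableSpace (Γ ⊕ M) t
  isEmbedding_inl : @Topology.IsEmbedding Γ (Γ ⊕ M) ⊥ t Sum.inl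
  isEmbedding_inr : @Topology.IsEmbedding M (Γ ⊕ M) _ t Sum.inr
  continuous_action : ∀ γ : Γ, @Continuous (Γ ⊕ M) (Γ ⊕ M) t t (sumAction Γ γ)
  convergence : ∀ γ : ℕ → Γ, Function.Injective γ →
    ∃ (a b : Γ ⊕ M) (φ : ℕ → ℕ), StrictMono φ ∧
      @TendstoLocallyUniformlyOnConst (Γ ⊕ M) (Γ ⊕ M) t t
        (fun j => sumAction Γ (γ (φ j))) a {b}ᶜ

/-- The distance function of a metric-space structure given as data. -/
def cdist {X : Type*} (m : MetricSpace X) (p q : X) : ℝ := letI := m; dist p q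

/-- The topology of a metric-space structure given as data. -/
def ctop {X : Type*} (m : MetricSpace X) : TopologicalSpace X := letI := m; inferInstance

/-- A compatible metric on `Γ ⊔ M`: a metric whose topology is a compactifying topology. -/
def IsCompatibleMetric (Γ : Subgroup (M ≃ₜ M)) (m : MetricSpace (Γ ⊕ M)) : Prop :=
  IsCompactifyingTopology Γ (ctop m)

/-- The shadow `S_ε(γ) = γ (M ∖ B_ε(γ⁻¹))`. -/
def shadow {Γ : Subgroup (M ≃ₜ M)} (m : MetricSpace (Γ ⊕ M)) (ε : ℝ) (γ : Γ) : Set M :=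
  (fun x => (γ : M ≃ₜ M) x) '' {x : M | ε ≤ cdist m (Sum.inr x) (Sum.inl γ⁻¹)}

/-- The `ε`-uniform conical limit set. -/
def uniformConicalLimitSet (Γ : Subgroup (M ≃ₜ M)) (m : MetricSpace (Γ ⊕ M)) (ε : ℝ) :
    Set M :=
  {x | ∃ (a b : M) (γ : ℕ → Γ), ε ≤ cdist m (Sum.inr a) (Sum.inr b) ∧
    Tendsto (fun n => (γ n : M ≃ₜ M) x) atTop (nhds b) ∧
    ∀ y : M, y ≠ x → Tendsto (fun n => (γ n : M ≃ₜ M) y) atTop (nhds a)}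

/-- A `κ`-coarse-cocycle. -/
structure IsCoarseCocycle {Γ : Subgroup (M ≃ₜ M)} (σ : Γ → M → ℝ) (κ : ℝ) : Prop where
  nonneg : 0 ≤ κ
  coarse_cont : ∀ (γ : Γ) (x₀ : M), ∀ ε > 0, ∀ᶠ x in nhds x₀, |σ γ x₀ - σ γ x| < κ + ε
  cocycle : ∀ (γ₁ γ₂ : Γ) (x : M),
    |σ (γ₁ * γ₂) x - (σ γ₁ ((γ₂ : M ≃ₜ M) x) + σ γ₂ x)| ≤ κ

/-- `γ` is loxodromic with attracting fixed point `p` and repelling fixed point `q`. -/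
def IsLoxodromicWith {Γ : Subgroup (M ≃ₜ M)} (γ : Γ) (p q : M) : Prop :=
  p ≠ q ∧ (γ : M ≃ₜ M) p = p ∧ (γ : M ≃ₜ M) q = q ∧
  TendstoLocallyUniformlyOnConst (fun n x => ((γ ^ n : Γ) : M ≃ₜ M) x) p {q}ᶜ ∧
  TendstoLocallyUniformlyOnConst (fun n x => ((γ⁻¹ ^ n : Γ) : M ≃ₜ M) x) q {p}ᶜ

/-- `γ` is parabolic with unique fixed point `p`. -/
def IsParabolicWith {Γ : Subgroup (M ≃ₜ M)} (γ : Γ) (p : M) : Prop :=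
  (γ : M ≃ₜ M) p = p ∧ (∀ q : M, (γ : M ≃ₜ M) q = q → q = p) ∧
  TendstoLocallyUniformlyOnConst (fun n x => ((γ ^ n : Γ) : M ≃ₜ M) x) p {p}ᶜ ∧
  TendstoLocallyUniformlyOnConst (fun n x => ((γ⁻¹ ^ n : Γ) : M ≃ₜ M) x) p {p}ᶜ

/-- A proper coarse-cocycle: `σ(γ_n, γ_n⁺) → +∞` along distinct loxodromic elements
whose fixed-point pairs stay uniformly separated. -/
def IsProperCocycle {Γ : Subgroup (M ≃ₜ M)} (m : MetricSpace (Γ ⊕ M))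
    (σ : Γ → M → ℝ) : Prop :=
  ∀ (γ : ℕ → Γ) (p q : ℕ → M), Function.Injective γ →
    (∀ n, IsLoxodromicWith (γ n) (p n) (q n)) →
    (∃ c > 0, ∀ᶠ n in atTop, c ≤ cdist m (Sum.inr (q n)) (Sum.inr (p n))) →
    Tendsto (fun n => σ (γ n) (p n)) atTop atTop

/-- `σ` is expanding with magnitude function `h = ‖·‖_σ`. -/
def IsExpandingWith {Γ : Subgroup (M ≃ₜ M)} (m : MetricSpace (Γ ⊕ M))
    (σ : Γ → M → ℝ) (h : Γ → ℝ) : Prop :=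
  IsProperCocycle m σ ∧
  ∀ ε > 0, ∃ C > 0, ∀ (γ : Γ) (x : M),
    ε < cdist m (Sum.inr x) (Sum.inl γ⁻¹) → |σ γ x - h γ| ≤ C

/-- An escaping sequence in `Γ`. -/
def IsEscaping {Γ : Subgroup (M ≃ₜ M)} (γ : ℕ → Γ) : Prop :=
  ∀ F : Finset Γ, ∀ᶠ n in atTop, γ n ∉ F

/-- The critical exponent `δ_σ(Γ)` attached to a magnitude function `h = ‖·‖_σ`. -/
noncomputable def critExp {Γ : Subgroup (M ≃ₜ M)} (h : Γ → ℝ) : ℝ :=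
  sInf {s : ℝ | 0 < s ∧ Summable (fun γ : Γ => Real.exp (-s * h γ))}

/-- A `C`-coarse `σ`-Patterson–Sullivan measure of dimension `δ`. -/
def IsCoarsePS [MeasurableSpace M] [BorelSpace M] {Γ : Subgroup (M ≃ₜ M)}
    (σ : Γ → M → ℝ) (C δ : ℝ) (μ : Measure M) : Prop :=
  IsProbabilityMeasure μ ∧ 0 ≤ C ∧
  ∀ γ : Γ,
    Measure.map (γ : M ≃ₜ M) μ ≪ μ ∧ μ ≪ Measure.map (γ : M ≃ₜ M) μ ∧
    ∀ᵐ x ∂μ,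
      Real.exp (-C - δ * σ γ⁻¹ x) ≤ ((Measure.map (γ : M ≃ₜ M) μ).rnDeriv μ x).toReal ∧
      ((Measure.map (γ : M ≃ₜ M) μ).rnDeriv μ x).toReal ≤ Real.exp (C - δ * σ γ⁻¹ x)

/-- A coarse `σ`-Patterson–Sullivan measure of dimension `δ` (for some constant `C`). -/
def IsCoarsePSDim [MeasurableSpace M] [BorelSpace M] {Γ : Subgroup (M ≃ₜ M)}
    (σ : Γ → M → ℝ) (δ : ℝ) (μ : Measure M) : Prop :=
  ∃ C : ℝ, IsCoarsePS σ C δ μ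

/-- A `κ`-coarse Gromov–Patterson–Sullivan system `(σ, σ̄, G)`. -/
structure IsCoarseGPS {Γ : Subgroup (M ≃ₜ M)} (m : MetricSpace (Γ ⊕ M))
    (σ σb : Γ → M → ℝ) (G : M → M → ℝ) (κ : ℝ) : Prop where
  cocycle : IsCoarseCocycle σ κ
  cocycle_bar : IsCoarseCocycle σb κ
  proper : IsProperCocycle m σ
  proper_bar : IsProperCocycle m σb
  locBounded : ∀ x y : M, x ≠ y → ∃ (U V : Set M) (B : ℝ),
    IsOpen U ∧ IsOpen V ∧ x ∈ U ∧ y ∈ V ∧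
    ∀ x' ∈ U, ∀ y' ∈ V, x' ≠ y' → |G x' y'| ≤ B
  compat : ∀ (γ : Γ) (x y : M), x ≠ y →
    |(σb γ x + σ γ y) - (G ((γ : M ≃ₜ M) x) ((γ : M ≃ₜ M) y) - G x y)| ≤ κ

/-- The diagonal action of `Γ` on `M × M`. -/
def prodAct {Γ : Subgroup (M ≃ₜ M)} (γ : Γ) : M × M → M × M :=
  fun p => ((γ : M ≃ₜ M) p.1, (γ : M ≃ₜ M) p.2)

/-- `M^{(2)}`, the set of pairs of distinct points. -/
def offDiag2 (M : Type*) : Set (M × M) := {p : M × M | p.1 ≠ p.2}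
section Aux
set_option linter.unusedSectionVars false

open Sum

variable {M : Type*} [MetricSpace M] [CompactSpace M] {Γ : Subgroup (M ≃ₜ M)}

lemma coe_inv_apply (γ : Γ) (x : M) :
    ((γ⁻¹ : Γ) : M ≃ₜ M) x = ((γ : M ≃ₜ M)).symm x := rfl

lemma apply_inv_apply (γ : Γ) (x : M) :
    (γ : M ≃ₜ M) (((γ⁻¹ : Γ) : M ≃ₜ M) x) = x :=
  (γ : M ≃ₜ M).apply_symm_apply x

lemma inv_apply_apply (γ : Γ) (x : M) :
    ((γ⁻¹ : Γ) : M ≃ₜ M) ((γ : M ≃ₜ M) x) = x :=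
  (γ : M ≃ₜ M).symm_apply_apply x

lemma subgroup_one_apply (x : M) : ((1 : Γ) : M ≃ₜ M) x = x := rfl

lemma sumAction_inl (γ α : Γ) : sumAction Γ γ (Sum.inl α) = Sum.inl (γ * α) := rfl

lemma sumAction_inr (γ : Γ) (x : M) :
    sumAction Γ γ (Sum.inr x) = Sum.inr ((γ : M ≃ₜ M) x) := rfl

lemma sumAction_inv_left (γ : Γ) (z : Γ ⊕ M) :
    sumAction Γ γ⁻¹ (sumAction Γ γ z) = z := by
  cases z with
  | inl α => simp [sumAction, inv_mul_cancel_left]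
  | inr x =>
    show Sum.inr (((γ⁻¹ : Γ) : M ≃ₜ M) ((γ : M ≃ₜ M) x)) = Sum.inr x
    rw [inv_apply_apply]

lemma sumAction_inv_right (γ : Γ) (z : Γ ⊕ M) :
    sumAction Γ γ (sumAction Γ γ⁻¹ z) = z := by
  have := sumAction_inv_left (γ := γ⁻¹) (z := z)
  rwa [inv_inv] at this

lemma tluc_subseq {Z W : Type*} [TopologicalSpace Z] [TopologicalSpace W]
    {F : ℕ → Z → W} {a : W} {S : Set Z}
    (h : TendstoLocallyUniformlyOnConst F a S) {φ : ℕ → ℕ} (hφ : StrictMono φ) :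
    TendstoLocallyUniformlyOnConst (fun j => F (φ j)) a S := by
  intro U hU x hx
  obtain ⟨V, hV, hev⟩ := h U hU x hx
  exact ⟨V, hV, hφ.tendsto_atTop.eventually hev⟩

lemma tluc_comp {Z W : Type*} [TopologicalSpace Z] [TopologicalSpace W] [T1Space Z]
    {F : ℕ → Z → W} {a : W} {b : Z}
    (h : TendstoLocallyUniformlyOnConst F a {b}ᶜ) {z : ℕ → Z} {c : Z}
    (hc : c ≠ b) (hz : Tendsto z atTop (𝓝 c)) :
    Tendsto (fun n => F n (z n)) atTop (𝓝 a) := by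
  rw [Filter.tendsto_def]
  intro s hs
  obtain ⟨V, hV, hev⟩ := h s hs c hc
  obtain ⟨U, hU, hUV⟩ := mem_nhdsWithin_iff_exists_mem_nhds_inter.mp hV
  have h1 : ∀ᶠ n in atTop, z n ∈ U := hz.eventually_mem hU
  have h2 : ∀ᶠ n in atTop, z n ∈ ({b}ᶜ : Set Z) :=
    hz.eventually_mem (isOpen_compl_singleton.mem_nhds hc)
  filter_upwards [h1, h2, hev] with n hn1 hn2 hn3
  exact hn3 _ (hUV ⟨hn1, hn2⟩)

/-- extraction of an injective subsequence. -/
lemma exists_injective_subseq {α : Type*} (γ : ℕ → α)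
    (hfin : ∀ g : α, {n | γ n = g}.Finite) :
    ∃ φ : ℕ → ℕ, StrictMono φ ∧ Function.Injective (γ ∘ φ) := by
  classical
  have key : ∀ (F : Finset α) (N : ℕ), ∃ n, N < n ∧ γ n ∉ F := by
    intro F N
    by_contra h
    push_neg at h
    have hsub : Set.Ioi N ⊆ ⋃ g ∈ F, {n | γ n = g} := by
      intro n hn
      have := h n hn
      exact Set.mem_biUnion this rfl
    have hfin2 : (Set.Ioi N).Finite :=
      (F.finite_toSet.biUnion (fun g _ => hfin g)).subset hsub
    exact (Set.Ioi_infinite N) hfin2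
  let step : ℕ × Finset α → ℕ × Finset α := fun s =>
    let F' := insert (γ s.1) s.2
    (Classical.choose (key F' s.1), F')
  let s : ℕ → ℕ × Finset α := fun k => step^[k] (0, ∅)
  have hs_succ : ∀ k, s (k+1) = step (s k) := by
    intro k
    show step^[k+1] (0, ∅) = step (step^[k] (0, ∅))
    rw [Function.iterate_succ_apply']
  have hspec : ∀ k, (s k).1 < (s (k+1)).1 ∧ γ (s (k+1)).1 ∉ insert (γ (s k).1) (s k).2 := by
    intro k
    rw [hs_succ k]
    exact Classical.choose_spec (key (insert (γ (s k).1) (s k).2) (s k).1)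
  have hF_succ : ∀ k, (s (k+1)).2 = insert (γ (s k).1) (s k).2 := by
    intro k; rw [hs_succ k]
  refine ⟨fun k => (s k).1, strictMono_nat_of_lt_succ (fun k => (hspec k).1), ?_⟩
  have hmem : ∀ i k, i ≤ k → γ (s i).1 ∈ (s (k+1)).2 := by
    intro i k
    induction k with
    | zero => intro hik; rw [Nat.le_zero] at hik; subst hik
              rw [hF_succ]; exact Finset.mem_insert_self _ _
    | succ k ih =>
      intro hik
      rcases Nat.lt_or_ge i (k+1) with h | h
      · have := ih (Nat.lt_succ_iff.mp h)
        rw [hF_succ (k+1)]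
        exact Finset.mem_insert_of_mem this
      · have hik2 : i = k+1 := le_antisymm hik h
        subst hik2
        rw [hF_succ (k+1)]
        exact Finset.mem_insert_self _ _
  have hne : ∀ i k, i ≤ k → γ (s (k+1)).1 ≠ γ (s i).1 := by
    intro i k hik hEq
    have h1 := (hspec k).2
    rw [← hF_succ k] at h1
    exact h1 (hEq ▸ hmem i k hik)
  intro i j hEq
  rcases lt_trichotomy i j with h | h | h
  · cases j with
    | zero => omega
    | succ k => exact absurd (hEq.symm) (hne i k (Nat.lt_succ_iff.mp h))
  · exact h
  · cases i with
    | zero => omega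
    | succ k => exact absurd hEq (hne j k (Nat.lt_succ_iff.mp h))

/-- a coarsely continuous function is bounded on the compact space `M`. -/
lemma bounded_of_coarse {τ : Γ → M → ℝ} {κ : ℝ} (hτ : IsCoarseCocycle τ κ) (γ : Γ) :
    ∃ B : ℝ, ∀ x : M, |τ γ x| ≤ B := by
  classical
  have hU : ∀ x₀ : M, {x | |τ γ x₀ - τ γ x| < κ + 1} ∈ 𝓝 x₀ :=
    fun x₀ => hτ.coarse_cont γ x₀ 1 one_pos
  obtain ⟨t, _, hcover⟩ := isCompact_univ.elim_nhds_subcover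
    (fun x₀ => {x | |τ γ x₀ - τ γ x| < κ + 1}) (fun x _ => hU x)
  rcases t.eq_empty_or_nonempty with rfl | hne
  · refine ⟨0, fun x => ?_⟩
    have := hcover (Set.mem_univ x)
    simp at this
  · refine ⟨t.sup' hne (fun x₀ => |τ γ x₀|) + (κ + 1), fun x => ?_⟩
    have := hcover (Set.mem_univ x)
    simp only [Set.mem_iUnion] at this
    obtain ⟨x₀, hx₀t, hx⟩ := this
    have h1 : |τ γ x₀ - τ γ x| < κ + 1 := hx
    have h2 : |τ γ x₀| ≤ t.sup' hne (fun x₀ => |τ γ x₀|) := Finset.le_sup' (fun x₀ => |τ γ x₀|) hx₀t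
    have h3 : |τ γ x| ≤ |τ γ x₀| + |τ γ x₀ - τ γ x| := by
      have := abs_sub_abs_le_abs_sub (τ γ x) (τ γ x₀)
      have h4 := abs_sub_comm (τ γ x) (τ γ x₀)
      linarith [abs_sub_abs_le_abs_sub (τ γ x) (τ γ x₀), abs_sub_comm (τ γ x₀) (τ γ x)]
    linarith

/-- three distinct points of `M` from non-elementarity. -/
lemma exists_three (hNE : IsNonElementary Γ) :
    ∃ p q r : M, p ≠ q ∧ p ≠ r ∧ q ≠ r := by
  obtain ⟨t, _, ht3⟩ := Set.exists_subset_encard_eq hNE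
  obtain ⟨p, q, r, hpq, hpr, hqr, -⟩ := Set.encard_eq_three.mp ht3
  exact ⟨p, q, r, hpq, hpr, hqr⟩

/-- among three `2ε`-separated points, at least two are `ε`-far from any given point. -/
lemma exists_two_far (m : MetricSpace (Γ ⊕ M)) {p q r : M} {ε : ℝ} (hε : 0 < ε)
    (hpq : 2 * ε ≤ cdist m (inr p) (inr q)) (hpr : 2 * ε ≤ cdist m (inr p) (inr r))
    (hqr : 2 * ε ≤ cdist m (inr q) (inr r)) (ζ : Γ ⊕ M) :
    ∃ s t : M, s ≠ t ∧ s ∈ ({p, q, r} : Set M) ∧ t ∈ ({p, q, r} : Set M) ∧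
      ε ≤ cdist m (inr s) ζ ∧ ε ≤ cdist m (inr t) ζ := by
  letI := m
  have tri : ∀ a b : M, 2 * ε ≤ dist (inr a : Γ ⊕ M) (inr b) →
      cdist m (inr a) ζ < ε → ε ≤ cdist m (inr b) ζ := by
    intro a b hab ha
    have : cdist m (inr a) ζ = dist (inr a : Γ ⊕ M) ζ := rfl
    have hb : cdist m (inr b) ζ = dist (inr b : Γ ⊕ M) ζ := rfl
    rw [this] at ha; rw [hb]
    have := dist_triangle (inr a : Γ ⊕ M) ζ (inr b)
    have := dist_comm (ζ) (inr b : Γ ⊕ M)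
    linarith [dist_triangle (inr a : Γ ⊕ M) ζ (inr b), dist_comm ζ (inr b : Γ ⊕ M)]
  have hp : p ∈ ({p, q, r} : Set M) := by simp
  have hq : q ∈ ({p, q, r} : Set M) := by simp
  have hr : r ∈ ({p, q, r} : Set M) := by simp
  have hd : ∀ a : M, cdist m (inr a) (inr a) = 0 := fun a => dist_self _
  by_cases h1 : cdist m (inr p) ζ < ε
  · refine ⟨q, r, ?_, hq, hr, tri p q hpq h1, tri p r hpr h1⟩
    intro h
    rw [h] at hqr
    have := hd r
    linarith
  · push_neg at h1
    by_cases h2 : cdist m (inr q) ζ < ε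
    · refine ⟨p, r, ?_, hp, hr, h1, tri q r hqr h2⟩
      intro h
      rw [h] at hpr
      have := hd r
      linarith
    · push_neg at h2
      refine ⟨p, q, ?_, hp, hq, h1, h2⟩
      intro h
      rw [h] at hpq
      have := hd q
      linarith

/-- Main dynamical lemma: attracting/repelling structure for an injective sequence. -/
lemma dyn (m : MetricSpace (Γ ⊕ M)) (hm : IsCompatibleMetric Γ m)
    {p q r : M} (hpq : p ≠ q) (hpr : p ≠ r) (hqr : q ≠ r)
    (δ : ℕ → Γ) (hδ : Function.Injective δ) :
    ∃ (φ : ℕ → ℕ) (a₀ b₀ : M), StrictMono φ ∧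
      (@TendstoLocallyUniformlyOnConst _ _ (ctop m) (ctop m)
        (fun j => sumAction Γ (δ (φ j))) (Sum.inr a₀) {Sum.inr b₀}ᶜ) ∧
      (@TendstoLocallyUniformlyOnConst _ _ (ctop m) (ctop m)
        (fun j => sumAction Γ ((δ (φ j))⁻¹)) (Sum.inr b₀) {Sum.inr a₀}ᶜ) ∧
      Tendsto (fun j => cdist m (Sum.inl (δ (φ j))) (Sum.inr a₀)) atTop (𝓝 0) ∧
      Tendsto (fun j => cdist m (Sum.inl ((δ (φ j))⁻¹)) (Sum.inr b₀)) atTop (𝓝 0) := by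
  letI := m
  have hm' : IsCompactifyingTopology Γ (ctop m) := hm
  haveI hcs : CompactSpace (Γ ⊕ M) := hm'.compact
  -- two auxiliary families of distinct points of `Γ ⊕ M`
  have two_ne : ∀ w : Γ ⊕ M, ∃ z₁ z₂ : Γ ⊕ M,
      z₁ ≠ z₂ ∧ z₁ ≠ w ∧ z₂ ≠ w ∧ z₁ ∈ Set.range (Sum.inr : M → Γ ⊕ M) ∧
      z₂ ∈ Set.range (Sum.inr : M → Γ ⊕ M) := by
    intro w
    by_cases hp : (Sum.inr p : Γ ⊕ M) = w
    · exact ⟨Sum.inr q, Sum.inr r, by simp [hqr], by rw [← hp]; simp [hpq.symm],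
        by rw [← hp]; simp [hpr.symm], ⟨q, rfl⟩, ⟨r, rfl⟩⟩
    · by_cases hq : (Sum.inr q : Γ ⊕ M) = w
      · exact ⟨Sum.inr p, Sum.inr r, by simp [hpr], hp, by rw [← hq]; simp [hqr.symm],
          ⟨p, rfl⟩, ⟨r, rfl⟩⟩
      · exact ⟨Sum.inr p, Sum.inr q, by simp [hpq], hp, hq, ⟨p, rfl⟩, ⟨q, rfl⟩⟩
  have hclosed : IsClosed (Set.range (Sum.inr : M → Γ ⊕ M)) :=
    by haveI : @T2Space (Γ ⊕ M) (ctop m) := inferInstanceAs (T2Space (Γ ⊕ M)); exact (isCompact_range hm'.isEmbedding_inr.continuous).isClosed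
  obtain ⟨a, b, φ₁, hφ₁, h₁⟩ := hm'.convergence δ hδ
  obtain ⟨a', b', φ₂, hφ₂, h₂⟩ := hm'.convergence (fun n => (δ (φ₁ n))⁻¹)
    (fun i j h => hφ₁.injective (hδ (inv_injective h)))
  have h₁' : TendstoLocallyUniformlyOnConst
      (fun j => sumAction Γ (δ (φ₁ (φ₂ j)))) a {b}ᶜ := tluc_subseq h₁ hφ₂
  have h₂' : TendstoLocallyUniformlyOnConst
      (fun j => sumAction Γ ((δ (φ₁ (φ₂ j)))⁻¹)) a' {b'}ᶜ := h₂
  -- source-sink identities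
  have hab' : a = b' := by
    by_contra hab'
    have key : ∀ z : Γ ⊕ M, z ≠ b → z = a' := by
      intro z hz
      have s1 : Tendsto (fun j => sumAction Γ (δ (φ₁ (φ₂ j))) z) atTop (𝓝 a) :=
        tluc_comp h₁' hz tendsto_const_nhds
      have s2 : Tendsto (fun j => sumAction Γ ((δ (φ₁ (φ₂ j)))⁻¹)
          (sumAction Γ (δ (φ₁ (φ₂ j))) z)) atTop (𝓝 a') := tluc_comp h₂' hab' s1
      have s3 : (fun j => sumAction Γ ((δ (φ₁ (φ₂ j)))⁻¹)
          (sumAction Γ (δ (φ₁ (φ₂ j))) z)) = fun _ => z :=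
        funext fun j => sumAction_inv_left _ z
      rw [s3] at s2
      exact tendsto_nhds_unique tendsto_const_nhds s2
    obtain ⟨z₁, z₂, h12, h1b, h2b, -, -⟩ := two_ne b
    exact h12 ((key z₁ h1b).trans (key z₂ h2b).symm)
  have ha'b : a' = b := by
    by_contra ha'b
    have key : ∀ z : Γ ⊕ M, z ≠ b' → z = a := by
      intro z hz
      have s1 : Tendsto (fun j => sumAction Γ ((δ (φ₁ (φ₂ j)))⁻¹) z) atTop (𝓝 a') :=
        tluc_comp h₂' hz tendsto_const_nhds
      have s2 : Tendsto (fun j => sumAction Γ (δ (φ₁ (φ₂ j)))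
          (sumAction Γ ((δ (φ₁ (φ₂ j)))⁻¹) z)) atTop (𝓝 a) := tluc_comp h₁' ha'b s1
      have s3 : (fun j => sumAction Γ (δ (φ₁ (φ₂ j)))
          (sumAction Γ ((δ (φ₁ (φ₂ j)))⁻¹) z)) = fun _ => z :=
        funext fun j => sumAction_inv_right _ z
      rw [s3] at s2
      exact tendsto_nhds_unique tendsto_const_nhds s2
    obtain ⟨z₁, z₂, h12, h1b, h2b, -, -⟩ := two_ne b'
    exact h12 ((key z₁ h1b).trans (key z₂ h2b).symm)
  -- a and b are points of M
  have ha : a ∈ Set.range (Sum.inr : M → Γ ⊕ M) := by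
    obtain ⟨z₁, -, -, h1b, -, ⟨z₀, rfl⟩, -⟩ := two_ne b
    have s1 : Tendsto (fun j => sumAction Γ (δ (φ₁ (φ₂ j))) (Sum.inr z₀)) atTop (𝓝 a) :=
      tluc_comp h₁' h1b tendsto_const_nhds
    exact hclosed.mem_of_tendsto s1 (Filter.Eventually.of_forall fun j => ⟨_, rfl⟩)
  have hb : b ∈ Set.range (Sum.inr : M → Γ ⊕ M) := by
    obtain ⟨z₁, -, -, h1b, -, ⟨z₀, rfl⟩, -⟩ := two_ne b'
    have s1 : Tendsto (fun j => sumAction Γ ((δ (φ₁ (φ₂ j)))⁻¹) (Sum.inr z₀)) atTop (𝓝 a') :=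
      tluc_comp h₂' h1b tendsto_const_nhds
    rw [ha'b] at s1
    exact hclosed.mem_of_tendsto s1 (Filter.Eventually.of_forall fun j => ⟨_, rfl⟩)
  obtain ⟨a₀, ha₀⟩ := ha
  obtain ⟨b₀, hb₀⟩ := hb
  subst ha₀
  subst hb₀
  subst hab'
  subst ha'b
  -- the inverses converge to b
  obtain ⟨c, -, φ₃, hφ₃, hc⟩ := IsCompact.tendsto_subseq (x := fun j =>
    (Sum.inl ((δ (φ₁ (φ₂ j)))⁻¹) : Γ ⊕ M)) isCompact_univ (fun n => Set.mem_univ _)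
  have h₁'' : TendstoLocallyUniformlyOnConst
      (fun j => sumAction Γ (δ (φ₁ (φ₂ (φ₃ j))))) (Sum.inr a₀) {Sum.inr b₀}ᶜ := tluc_subseq h₁' hφ₃
  have h₂'' : TendstoLocallyUniformlyOnConst
      (fun j => sumAction Γ ((δ (φ₁ (φ₂ (φ₃ j))))⁻¹)) (Sum.inr b₀) {Sum.inr a₀}ᶜ := tluc_subseq h₂' hφ₃
  have hcb : c = Sum.inr b₀ := by
    by_contra hcb
    have s2 : Tendsto (fun j => sumAction Γ (δ (φ₁ (φ₂ (φ₃ j))))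
        (Sum.inl ((δ (φ₁ (φ₂ (φ₃ j))))⁻¹))) atTop (𝓝 (Sum.inr a₀)) := tluc_comp h₁'' hcb hc
    have s3 : (fun j => sumAction Γ (δ (φ₁ (φ₂ (φ₃ j))))
        (Sum.inl ((δ (φ₁ (φ₂ (φ₃ j))))⁻¹))) = fun _ => (Sum.inl 1 : Γ ⊕ M) :=
      funext fun j => by rw [sumAction_inl, mul_inv_cancel]
    rw [s3] at s2
    exact Sum.inr_ne_inl (tendsto_nhds_unique s2 tendsto_const_nhds)
  rw [hcb] at hc
  -- the elements themselves converge to b' = a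
  obtain ⟨c', -, φ₄, hφ₄, hc'⟩ := IsCompact.tendsto_subseq (x := fun j =>
    (Sum.inl (δ (φ₁ (φ₂ (φ₃ j)))) : Γ ⊕ M)) isCompact_univ (fun n => Set.mem_univ _)
  have h₁3 : TendstoLocallyUniformlyOnConst
      (fun j => sumAction Γ (δ (φ₁ (φ₂ (φ₃ (φ₄ j)))))) (Sum.inr a₀) {Sum.inr b₀}ᶜ := tluc_subseq h₁'' hφ₄
  have h₂3 : TendstoLocallyUniformlyOnConst
      (fun j => sumAction Γ ((δ (φ₁ (φ₂ (φ₃ (φ₄ j)))))⁻¹)) (Sum.inr b₀) {Sum.inr a₀}ᶜ := tluc_subseq h₂'' hφ₄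
  have hc'b' : c' = Sum.inr a₀ := by
    by_contra hc'b'
    have s2 : Tendsto (fun j => sumAction Γ ((δ (φ₁ (φ₂ (φ₃ (φ₄ j)))))⁻¹)
        (Sum.inl (δ (φ₁ (φ₂ (φ₃ (φ₄ j))))))) atTop (𝓝 (Sum.inr b₀)) := tluc_comp h₂3 hc'b' hc'
    have s3 : (fun j => sumAction Γ ((δ (φ₁ (φ₂ (φ₃ (φ₄ j)))))⁻¹)
        (Sum.inl (δ (φ₁ (φ₂ (φ₃ (φ₄ j))))))) = fun _ => (Sum.inl 1 : Γ ⊕ M) :=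
      funext fun j => by rw [sumAction_inl, inv_mul_cancel]
    rw [s3] at s2
    exact Sum.inr_ne_inl (tendsto_nhds_unique s2 tendsto_const_nhds)
  rw [hc'b'] at hc'
  refine ⟨fun j => φ₁ (φ₂ (φ₃ (φ₄ j))), a₀, b₀,
    (hφ₁.comp (hφ₂.comp (hφ₃.comp hφ₄)) : _), ?_, ?_, ?_, ?_⟩
  · exact h₁3
  · exact h₂3
  · exact tendsto_iff_dist_tendsto_zero.mp hc'
  · have hcc : Tendsto ((fun j => (Sum.inl ((δ (φ₁ (φ₂ j)))⁻¹) : Γ ⊕ M)) ∘ φ₃ ∘ φ₄)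
        atTop (𝓝 (Sum.inr b₀)) := hc.comp hφ₄.tendsto_atTop
    exact tendsto_iff_dist_tendsto_zero.mp hcc

/-- Core uniform bound: two points far from `γ⁻¹` have comparable cocycle values. -/
lemma goalA (m : MetricSpace (Γ ⊕ M)) (hm : IsCompatibleMetric Γ m)
    {p q r : M} (hpq : p ≠ q) (hpr : p ≠ r) (hqr : q ≠ r)
    (τ ρ : Γ → M → ℝ) (F : M → M → ℝ) (κ : ℝ)
    (hτ : IsCoarseCocycle τ κ)
    (hF : ∀ x y : M, x ≠ y → ∃ (U V : Set M) (B : ℝ),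
      IsOpen U ∧ IsOpen V ∧ x ∈ U ∧ y ∈ V ∧
      ∀ x' ∈ U, ∀ y' ∈ V, x' ≠ y' → |F x' y'| ≤ B)
    (H : ∀ (γ : Γ) (w x : M), w ≠ x →
      |τ γ x - (F ((γ : M ≃ₜ M) w) ((γ : M ≃ₜ M) x) - F w x - ρ γ w)| ≤ κ) :
    ∀ ε > 0, ∃ C : ℝ, ∀ (γ : Γ) (x y : M),
      ε ≤ cdist m (Sum.inr x) (Sum.inl γ⁻¹) → ε ≤ cdist m (Sum.inr y) (Sum.inl γ⁻¹) →
      |τ γ x - τ γ y| ≤ C := by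
  letI := m
  have hm' : IsCompactifyingTopology Γ (ctop m) := hm
  intro ε hε
  by_contra hcon
  push_neg at hcon
  choose γs xs ys h1 h2 h3 using fun n : ℕ => hcon n
  by_cases hfin : ∀ g : Γ, {n | γs n = g}.Finite
  · -- the elements escape: extract an injective subsequence and use dynamics
    obtain ⟨ψ, hψ, hψinj⟩ := exists_injective_subseq γs hfin
    obtain ⟨φd, a₀, b₀, hφd, hT1, hT2, hDa, hDb⟩ := dyn m hm hpq hpr hqr (γs ∘ ψ) hψinj
    -- extract convergent subsequence of the pair of points
    obtain ⟨w, -, φ₅, hφ₅, hw⟩ := IsCompact.tendsto_subseq (x := fun j =>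
      ((xs (ψ (φd j)), ys (ψ (φd j))) : M × M)) isCompact_univ (fun n => Set.mem_univ _)
    have hx : Tendsto (fun k => xs (ψ (φd (φ₅ k)))) atTop (𝓝 w.1) := by
      simpa [Function.comp_def] using (continuous_fst.tendsto w).comp hw
    have hy : Tendsto (fun k => ys (ψ (φd (φ₅ k)))) atTop (𝓝 w.2) := by
      simpa [Function.comp_def] using (continuous_snd.tendsto w).comp hw
    have hT1' : TendstoLocallyUniformlyOnConst
        (fun k => sumAction Γ (γs (ψ (φd (φ₅ k))))) (Sum.inr a₀) {Sum.inr b₀}ᶜ :=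
      tluc_subseq hT1 hφ₅
    have hT2' : TendstoLocallyUniformlyOnConst
        (fun k => sumAction Γ ((γs (ψ (φd (φ₅ k))))⁻¹)) (Sum.inr b₀) {Sum.inr a₀}ᶜ :=
      tluc_subseq hT2 hφ₅
    have hDb' : Tendsto (fun k => (Sum.inl ((γs (ψ (φd (φ₅ k))))⁻¹) : Γ ⊕ M)) atTop
        (𝓝 (Sum.inr b₀)) := by
      apply tendsto_iff_dist_tendsto_zero.mpr
      exact hDb.comp hφ₅.tendsto_atTop
    have hinr : Continuous (Sum.inr : M → Γ ⊕ M) := hm'.isEmbedding_inr.continuous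
    have hxZ : Tendsto (fun k => (Sum.inr (xs (ψ (φd (φ₅ k)))) : Γ ⊕ M)) atTop
        (𝓝 (Sum.inr w.1)) := by
      simpa [Function.comp_def] using (hinr.tendsto w.1).comp hx
    have hyZ : Tendsto (fun k => (Sum.inr (ys (ψ (φd (φ₅ k)))) : Γ ⊕ M)) atTop
        (𝓝 (Sum.inr w.2)) := by
      simpa [Function.comp_def] using (hinr.tendsto w.2).comp hy
    -- the limits of the points are far from b₀
    have hsepx : ε ≤ dist (Sum.inr w.1 : Γ ⊕ M) (Sum.inr b₀) := by
      refine ge_of_tendsto' (hxZ.dist hDb') (fun k => h1 (ψ (φd (φ₅ k))))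
    have hsepy : ε ≤ dist (Sum.inr w.2 : Γ ⊕ M) (Sum.inr b₀) := by
      refine ge_of_tendsto' (hyZ.dist hDb') (fun k => h2 (ψ (φd (φ₅ k))))
    have hxb : w.1 ≠ b₀ := by
      intro h; rw [h, dist_self] at hsepx; linarith
    have hyb : w.2 ≠ b₀ := by
      intro h; rw [h, dist_self] at hsepy; linarith
    -- a point u distinct from a₀
    obtain ⟨u, hu⟩ : ∃ u : M, u ≠ a₀ := by
      by_cases hp : p = a₀
      · exact ⟨q, fun h => hpq (hp ▸ h ▸ rfl)⟩
      · exact ⟨p, hp⟩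
    -- the auxiliary points w_k = γ_k⁻¹ u
    have hwZ : Tendsto (fun k => (Sum.inr ((((γs (ψ (φd (φ₅ k))))⁻¹ : Γ) : M ≃ₜ M) u)
        : Γ ⊕ M)) atTop (𝓝 (Sum.inr b₀)) :=
      tluc_comp hT2' (fun h => hu (Sum.inr_injective h)) tendsto_const_nhds
    have hgxZ : Tendsto (fun k => (Sum.inr (((γs (ψ (φd (φ₅ k))) : Γ) : M ≃ₜ M)
        (xs (ψ (φd (φ₅ k))))) : Γ ⊕ M)) atTop (𝓝 (Sum.inr a₀)) :=
      tluc_comp hT1' (fun h => hxb (Sum.inr_injective h)) hxZ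
    have hgyZ : Tendsto (fun k => (Sum.inr (((γs (ψ (φd (φ₅ k))) : Γ) : M ≃ₜ M)
        (ys (ψ (φd (φ₅ k))))) : Γ ⊕ M)) atTop (𝓝 (Sum.inr a₀)) :=
      tluc_comp hT1' (fun h => hyb (Sum.inr_injective h)) hyZ
    -- move to M via the embedding
    have hwM : Tendsto (fun k => (((γs (ψ (φd (φ₅ k))))⁻¹ : Γ) : M ≃ₜ M) u) atTop
        (𝓝 b₀) := by
      rw [hm'.isEmbedding_inr.tendsto_nhds_iff]; exact hwZ
    have hgxM : Tendsto (fun k => ((γs (ψ (φd (φ₅ k))) : Γ) : M ≃ₜ M)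
        (xs (ψ (φd (φ₅ k))))) atTop (𝓝 a₀) := by
      rw [hm'.isEmbedding_inr.tendsto_nhds_iff]; exact hgxZ
    have hgyM : Tendsto (fun k => ((γs (ψ (φd (φ₅ k))) : Γ) : M ≃ₜ M)
        (ys (ψ (φd (φ₅ k))))) atTop (𝓝 a₀) := by
      rw [hm'.isEmbedding_inr.tendsto_nhds_iff]; exact hgyZ
    have hxM : Tendsto (fun k => xs (ψ (φd (φ₅ k)))) atTop (𝓝 w.1) := hx
    have hyM : Tendsto (fun k => ys (ψ (φd (φ₅ k)))) atTop (𝓝 w.2) := hy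
    -- local boundedness of F at the three limit pairs
    obtain ⟨U1, V1, B1, hU1o, hV1o, hU1, hV1, hB1⟩ := hF b₀ w.1 (Ne.symm hxb)
    obtain ⟨U2, V2, B2, hU2o, hV2o, hU2, hV2, hB2⟩ := hF b₀ w.2 (Ne.symm hyb)
    obtain ⟨U3, V3, B3, hU3o, hV3o, hU3, hV3, hB3⟩ := hF u a₀ hu
    -- all eventual statements
    have E1 : ∀ᶠ k in atTop, (((γs (ψ (φd (φ₅ k))))⁻¹ : Γ) : M ≃ₜ M) u ∈ U1 :=
      hwM.eventually_mem (hU1o.mem_nhds hU1)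
    have E1' : ∀ᶠ k in atTop, (((γs (ψ (φd (φ₅ k))))⁻¹ : Γ) : M ≃ₜ M) u ∈ U2 :=
      hwM.eventually_mem (hU2o.mem_nhds hU2)
    have E2 : ∀ᶠ k in atTop, xs (ψ (φd (φ₅ k))) ∈ V1 :=
      hxM.eventually_mem (hV1o.mem_nhds hV1)
    have E2' : ∀ᶠ k in atTop, ys (ψ (φd (φ₅ k))) ∈ V2 :=
      hyM.eventually_mem (hV2o.mem_nhds hV2)
    have E3 : ∀ᶠ k in atTop, ((γs (ψ (φd (φ₅ k))) : Γ) : M ≃ₜ M) (xs (ψ (φd (φ₅ k)))) ∈ V3 :=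
      hgxM.eventually_mem (hV3o.mem_nhds hV3)
    have E3' : ∀ᶠ k in atTop, ((γs (ψ (φd (φ₅ k))) : Γ) : M ≃ₜ M) (ys (ψ (φd (φ₅ k)))) ∈ V3 :=
      hgyM.eventually_mem (hV3o.mem_nhds hV3)
    have E4 : ∀ᶠ k in atTop, (((γs (ψ (φd (φ₅ k))))⁻¹ : Γ) : M ≃ₜ M) u ≠ xs (ψ (φd (φ₅ k))) := by
      have hdp : (0 : ℝ) < dist b₀ w.1 := dist_pos.mpr (Ne.symm hxb)
      filter_upwards [(hwM.dist hxM).eventually (lt_mem_nhds hdp)] with k hk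
      exact fun h => by rw [h, dist_self] at hk; linarith
    have E4' : ∀ᶠ k in atTop, (((γs (ψ (φd (φ₅ k))))⁻¹ : Γ) : M ≃ₜ M) u ≠ ys (ψ (φd (φ₅ k))) := by
      have hdp : (0 : ℝ) < dist b₀ w.2 := dist_pos.mpr (Ne.symm hyb)
      filter_upwards [(hwM.dist hyM).eventually (lt_mem_nhds hdp)] with k hk
      exact fun h => by rw [h, dist_self] at hk; linarith
    have E5 : ∀ᶠ k in atTop, u ≠ ((γs (ψ (φd (φ₅ k))) : Γ) : M ≃ₜ M) (xs (ψ (φd (φ₅ k)))) := by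
      have hdp : (0 : ℝ) < dist u a₀ := dist_pos.mpr hu
      filter_upwards [(tendsto_const_nhds.dist hgxM).eventually (lt_mem_nhds hdp)] with k hk
      exact fun h => by rw [← h, dist_self] at hk; linarith
    have E5' : ∀ᶠ k in atTop, u ≠ ((γs (ψ (φd (φ₅ k))) : Γ) : M ≃ₜ M) (ys (ψ (φd (φ₅ k)))) := by
      have hdp : (0 : ℝ) < dist u a₀ := dist_pos.mpr hu
      filter_upwards [(tendsto_const_nhds.dist hgyM).eventually (lt_mem_nhds hdp)] with k hk
      exact fun h => by rw [← h, dist_self] at hk; linarith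
    have E6 : ∀ᶠ k in (atTop : Filter ℕ), 2 * κ + B1 + B2 + 2 * B3 ≤ ((k : ℕ) : ℝ) :=
      tendsto_natCast_atTop_atTop.eventually_ge_atTop _
    have final : ∀ᶠ k in (atTop : Filter ℕ), False := by
      filter_upwards [E1, E1', E2, E2', E3, E3', E4, E4', E5, E5', E6] with k
        k1 k1' k2 k2' k3 k3' k4 k4' k5 k5' k6
      have hH1 := H (γs (ψ (φd (φ₅ k)))) ((((γs (ψ (φd (φ₅ k))))⁻¹ : Γ) : M ≃ₜ M) u)
        (xs (ψ (φd (φ₅ k)))) k4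
      have hH2 := H (γs (ψ (φd (φ₅ k)))) ((((γs (ψ (φd (φ₅ k))))⁻¹ : Γ) : M ≃ₜ M) u)
        (ys (ψ (φd (φ₅ k)))) k4'
      rw [apply_inv_apply] at hH1 hH2
      have b1 := hB1 _ k1 _ k2 k4
      have b2 := hB2 _ k1' _ k2' k4'
      have b3 := hB3 u hU3 _ k3 k5
      have b3' := hB3 u hU3 _ k3' k5'
      have hn := h3 (ψ (φd (φ₅ k)))
      have hkn : (k : ℝ) ≤ ((ψ (φd (φ₅ k))) : ℝ) := by
        exact_mod_cast (hψ.comp (hφd.comp hφ₅)).le_apply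
      have habs : |τ (γs (ψ (φd (φ₅ k)))) (xs (ψ (φd (φ₅ k)))) -
          τ (γs (ψ (φd (φ₅ k)))) (ys (ψ (φd (φ₅ k))))| ≤ 2 * κ + B1 + B2 + 2 * B3 := by
        rw [abs_le] at hH1 hH2 b1 b2 b3 b3' ⊢
        constructor <;> [nlinarith [hH1.1, hH1.2, hH2.1, hH2.2]; nlinarith [hH1.1, hH1.2, hH2.1, hH2.2]]
      linarith
    obtain ⟨-, hfalse⟩ := final.exists
    exact hfalse
  · -- a constant subsequence: use boundedness of `τ g`
    push_neg at hfin
    obtain ⟨g, hg⟩ := hfin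
    obtain ⟨B, hB⟩ := bounded_of_coarse hτ g
    have hg' : Set.Infinite {n | γs n = g} := hg
    obtain ⟨n, hn, hgt⟩ := hg'.exists_gt (Nat.ceil (2 * B))
    have hng : γs n = g := hn
    have h3n := h3 n
    rw [hng] at h3n
    have hbx := abs_le.mp (hB (xs n))
    have hby := abs_le.mp (hB (ys n))
    have hb : |τ g (xs n) - τ g (ys n)| ≤ 2 * B :=
      abs_le.mpr ⟨by linarith, by linarith⟩
    have : (2 * B : ℝ) ≤ (Nat.ceil (2*B) : ℝ) := Nat.le_ceil _
    have hcast : ((Nat.ceil (2*B) : ℕ) : ℝ) < (n : ℝ) := by exact_mod_cast hgt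
    linarith

/-- Uniformly bounded Gromov products at good pairs. -/
lemma goalB (m : MetricSpace (Γ ⊕ M)) (hm : IsCompatibleMetric Γ m)
    {p q r : M} {ε : ℝ} (hε : 0 < ε)
    (hpq : 2 * ε ≤ cdist m (inr p) (inr q)) (hpr : 2 * ε ≤ cdist m (inr p) (inr r))
    (hqr : 2 * ε ≤ cdist m (inr q) (inr r))
    (G : M → M → ℝ)
    (hG : ∀ x y : M, x ≠ y → ∃ (U V : Set M) (B : ℝ),
      IsOpen U ∧ IsOpen V ∧ x ∈ U ∧ y ∈ V ∧
      ∀ x' ∈ U, ∀ y' ∈ V, x' ≠ y' → |G x' y'| ≤ B) :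
    ∃ C : ℝ, ∀ γ : Γ, ∃ x z : M,
      (ε / 2 ≤ cdist m (Sum.inr x) (Sum.inl γ⁻¹) ∧
       ε / 2 ≤ cdist m (Sum.inr z) (Sum.inl γ) ∧
       ((γ⁻¹ : Γ) : M ≃ₜ M) z ≠ x) ∧
      max |G z ((γ : M ≃ₜ M) x)| |G (((γ⁻¹ : Γ) : M ≃ₜ M) z) x| ≤ C := by
  letI := m
  have hm' : IsCompactifyingTopology Γ (ctop m) := hm
  have hhalf : 0 < ε / 2 := half_pos hε
  -- existence of valid pairs for every group element
  have valid : ∀ g : Γ, ∃ x z : M,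
      ε ≤ cdist m (Sum.inr x) (Sum.inl g⁻¹) ∧ ε ≤ cdist m (Sum.inr z) (Sum.inl g) ∧
      ((g⁻¹ : Γ) : M ≃ₜ M) z ≠ x := by
    intro g
    obtain ⟨x, -, -, -, -, hx1, -⟩ := exists_two_far m hε hpq hpr hqr (Sum.inl g⁻¹)
    obtain ⟨s, t, hst, -, -, hs1, ht1⟩ := exists_two_far m hε hpq hpr hqr (Sum.inl g)
    by_cases hzs : ((g⁻¹ : Γ) : M ≃ₜ M) s = x
    · refine ⟨x, t, hx1, ht1, fun h => hst ?_⟩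
      have := h.trans hzs.symm
      have := congrArg (g : M ≃ₜ M) this
      rw [apply_inv_apply, apply_inv_apply] at this
      exact this.symm
    · exact ⟨x, s, hx1, hs1, hzs⟩
  by_contra hcon
  push_neg at hcon
  choose γs hs using fun n : ℕ => hcon n
  by_cases hfin : ∀ g : Γ, {n | γs n = g}.Finite
  · -- injective case
    obtain ⟨ψ, hψ, hψinj⟩ := exists_injective_subseq γs hfin
    have hne : ∀ a b : M, 2 * ε ≤ cdist m (inr a) (inr b) → a ≠ b := by
      intro a b hab h
      rw [h] at hab
      have : cdist m (inr b) (inr b) = 0 := dist_self _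
      linarith
    obtain ⟨φd, a₀, b₀, hφd, hT1, hT2, hDa, hDb⟩ := dyn m hm (hne p q hpq) (hne p r hpr)
      (hne q r hqr) (γs ∘ ψ) hψinj
    obtain ⟨x, -, -, -, -, hx1, -⟩ := exists_two_far m hε hpq hpr hqr (Sum.inr b₀)
    obtain ⟨z, -, -, -, -, hz1, -⟩ := exists_two_far m hε hpq hpr hqr (Sum.inr a₀)
    have hxb : x ≠ b₀ := by
      intro h; rw [h] at hx1
      have : cdist m (Sum.inr b₀) (Sum.inr b₀) = 0 := dist_self _
      linarith
    have hza : z ≠ a₀ := by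
      intro h; rw [h] at hz1
      have : cdist m (Sum.inr a₀) (Sum.inr a₀) = 0 := dist_self _
      linarith
    -- convergence of the moving points
    have hgxZ : Tendsto (fun k => (Sum.inr (((γs (ψ (φd k)) : Γ) : M ≃ₜ M) x) : Γ ⊕ M))
        atTop (𝓝 (Sum.inr a₀)) :=
      by haveI : @T1Space (Γ ⊕ M) (ctop m) := inferInstanceAs (T1Space (Γ ⊕ M)); exact tluc_comp hT1 (fun h => hxb (Sum.inr_injective h)) tendsto_const_nhds
    have hgzZ : Tendsto (fun k => (Sum.inr ((((γs (ψ (φd k)))⁻¹ : Γ) : M ≃ₜ M) z) : Γ ⊕ M))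
        atTop (𝓝 (Sum.inr b₀)) :=
      by haveI : @T1Space (Γ ⊕ M) (ctop m) := inferInstanceAs (T1Space (Γ ⊕ M)); exact tluc_comp hT2 (fun h => hza (Sum.inr_injective h)) tendsto_const_nhds
    have hgxM : Tendsto (fun k => ((γs (ψ (φd k)) : Γ) : M ≃ₜ M) x) atTop (𝓝 a₀) := by
      rw [hm'.isEmbedding_inr.tendsto_nhds_iff]; exact hgxZ
    have hgzM : Tendsto (fun k => (((γs (ψ (φd k)))⁻¹ : Γ) : M ≃ₜ M) z) atTop (𝓝 b₀) := by
      rw [hm'.isEmbedding_inr.tendsto_nhds_iff]; exact hgzZ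
    -- local boundedness at the limits
    obtain ⟨U1, V1, B1, hU1o, hV1o, hU1, hV1, hB1⟩ := hG z a₀ hza
    obtain ⟨U2, V2, B2, hU2o, hV2o, hU2, hV2, hB2⟩ := hG b₀ x (Ne.symm hxb)
    -- eventual statements
    have E1 : ∀ᶠ k in atTop, ε / 2 ≤ cdist m (Sum.inr x) (Sum.inl ((γs (ψ (φd k)))⁻¹)) := by
      filter_upwards [hDb.eventually (gt_mem_nhds hhalf)] with k hk
      have htri := dist_triangle (Sum.inr x : Γ ⊕ M) (Sum.inl ((γs (ψ (φd k)))⁻¹)) (Sum.inr b₀)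
      have hcomm := dist_comm (Sum.inl ((γs (ψ (φd k)))⁻¹) : Γ ⊕ M) (Sum.inr b₀)
      have hx1' : ε ≤ dist (Sum.inr x : Γ ⊕ M) (Sum.inr b₀) := hx1
      have hk' : dist (Sum.inl ((γs (ψ (φd k)))⁻¹) : Γ ⊕ M) (Sum.inr b₀) < ε / 2 := hk
      show ε / 2 ≤ dist (Sum.inr x : Γ ⊕ M) (Sum.inl ((γs (ψ (φd k)))⁻¹))
      linarith
    have E2 : ∀ᶠ k in atTop, ε / 2 ≤ cdist m (Sum.inr z) (Sum.inl (γs (ψ (φd k)))) := by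
      filter_upwards [hDa.eventually (gt_mem_nhds hhalf)] with k hk
      have htri := dist_triangle (Sum.inr z : Γ ⊕ M) (Sum.inl (γs (ψ (φd k)))) (Sum.inr a₀)
      have hz1' : ε ≤ dist (Sum.inr z : Γ ⊕ M) (Sum.inr a₀) := hz1
      have hk' : dist (Sum.inl (γs (ψ (φd k))) : Γ ⊕ M) (Sum.inr a₀) < ε / 2 := hk
      show ε / 2 ≤ dist (Sum.inr z : Γ ⊕ M) (Sum.inl (γs (ψ (φd k))))
      linarith
    have E3 : ∀ᶠ k in atTop, (((γs (ψ (φd k)))⁻¹ : Γ) : M ≃ₜ M) z ≠ x := by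
      have hdp : (0 : ℝ) < dist b₀ x := dist_pos.mpr (Ne.symm hxb)
      filter_upwards [(hgzM.dist tendsto_const_nhds).eventually (lt_mem_nhds hdp)] with k hk
      exact fun h => by rw [h, dist_self] at hk; linarith
    have E4 : ∀ᶠ k in atTop, z ≠ ((γs (ψ (φd k)) : Γ) : M ≃ₜ M) x := by
      have hdp : (0 : ℝ) < dist z a₀ := dist_pos.mpr hza
      filter_upwards [(tendsto_const_nhds.dist hgxM).eventually (lt_mem_nhds hdp)] with k hk
      exact fun h => by rw [← h, dist_self] at hk; linarith
    have E5 : ∀ᶠ k in atTop, ((γs (ψ (φd k)) : Γ) : M ≃ₜ M) x ∈ V1 :=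
      hgxM.eventually_mem (hV1o.mem_nhds hV1)
    have E6 : ∀ᶠ k in atTop, (((γs (ψ (φd k)))⁻¹ : Γ) : M ≃ₜ M) z ∈ U2 :=
      hgzM.eventually_mem (hU2o.mem_nhds hU2)
    have E7 : ∀ᶠ k in (atTop : Filter ℕ), max B1 B2 ≤ ((k : ℕ) : ℝ) :=
      tendsto_natCast_atTop_atTop.eventually_ge_atTop _
    have final : ∀ᶠ k in (atTop : Filter ℕ), False := by
      filter_upwards [E1, E2, E3, E4, E5, E6, E7] with k k1 k2 k3 k4 k5 k6 k7
      have hcall := hs (ψ (φd k)) x z ⟨k1, k2, k3⟩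
      have b1 : |G z (((γs (ψ (φd k)) : Γ) : M ≃ₜ M) x)| ≤ B1 := hB1 z hU1 _ k5 k4
      have b2 : |G ((((γs (ψ (φd k)))⁻¹ : Γ) : M ≃ₜ M) z) x| ≤ B2 := hB2 _ k6 x hV2 k3
      have hmax : max |G z (((γs (ψ (φd k)) : Γ) : M ≃ₜ M) x)|
          |G ((((γs (ψ (φd k)))⁻¹ : Γ) : M ≃ₜ M) z) x| ≤ max B1 B2 :=
        max_le_max b1 b2
      have hkn : (k : ℝ) ≤ ((ψ (φd k)) : ℝ) := by
        exact_mod_cast (hψ.comp hφd).le_apply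
      linarith
    obtain ⟨-, hfalse⟩ := final.exists
    exact hfalse
  · -- constant case
    push_neg at hfin
    obtain ⟨g, hg⟩ := hfin
    obtain ⟨x, z, hx1, hz1, hzx⟩ := valid g
    set Q := max |G z ((g : M ≃ₜ M) x)| |G (((g⁻¹ : Γ) : M ≃ₜ M) z) x| with hQ
    have hg' : Set.Infinite {n | γs n = g} := hg
    obtain ⟨n, hn, hgt⟩ := hg'.exists_gt (Nat.ceil Q)
    have hng : γs n = g := hn
    have hcall := hs n x z
    rw [hng] at hcall
    have := hcall ⟨le_trans (by linarith) hx1, le_trans (by linarith) hz1, hzx⟩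
    have hle : Q ≤ (Nat.ceil Q : ℝ) := Nat.le_ceil _
    have hcast : ((Nat.ceil Q : ℕ) : ℝ) < (n : ℝ) := by exact_mod_cast hgt
    linarith

end Aux

/-- Proposition 3.5 (1),(2): the cocycles of a coarse GPS system are
expanding, and the magnitudes of `σ` and `σ̄` are related by
`‖γ⁻¹‖_{σ̄} - C ≤ ‖γ‖_σ ≤ ‖γ⁻¹‖_{σ̄} + C`. -/
theorem gps_cocycles_expanding_and_dual_magnitudes
    {M : Type*} [MetricSpace M] [CompactSpace M]
    {Γ : Subgroup (M ≃ₜ M)} (hΓ : IsConvergenceGroup Γ) (hNE : IsNonElementary Γ)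
    (m : MetricSpace (Γ ⊕ M)) (hm : IsCompatibleMetric Γ m)
    (σ σb : Γ → M → ℝ) (G : M → M → ℝ) (κ : ℝ)
    (hGPS : IsCoarseGPS m σ σb G κ) :
    -- σ and σ̄ are expanding
    (∃ h : Γ → ℝ, IsExpandingWith m σ h) ∧
    (∃ hb : Γ → ℝ, IsExpandingWith m σb hb) ∧
    -- comparison of the magnitudes, for any choice of magnitude functions
    (∀ h hb : Γ → ℝ, IsExpandingWith m σ h → IsExpandingWith m σb hb →
      ∃ C > 0, ∀ γ : Γ, hb γ⁻¹ - C ≤ h γ ∧ h γ ≤ hb γ⁻¹ + C) := by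
  classical
  letI := m
  obtain ⟨p, q, r, hpq, hpr, hqr⟩ := exists_three hNE
  have hdpq : (0:ℝ) < cdist m (Sum.inr p) (Sum.inr q) :=
    dist_pos.mpr (fun h => hpq (Sum.inr_injective h))
  have hdpr : (0:ℝ) < cdist m (Sum.inr p) (Sum.inr r) :=
    dist_pos.mpr (fun h => hpr (Sum.inr_injective h))
  have hdqr : (0:ℝ) < cdist m (Sum.inr q) (Sum.inr r) :=
    dist_pos.mpr (fun h => hqr (Sum.inr_injective h))
  set ε₀ : ℝ := min (min (cdist m (Sum.inr p) (Sum.inr q)) (cdist m (Sum.inr p) (Sum.inr r)))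
    (cdist m (Sum.inr q) (Sum.inr r)) / 2 with hε₀def
  have hε₀ : 0 < ε₀ := by
    have := lt_min (lt_min hdpq hdpr) hdqr
    rw [hε₀def]; linarith
  have h2pq : 2 * ε₀ ≤ cdist m (Sum.inr p) (Sum.inr q) := by
    rw [hε₀def]
    have h1 := min_le_left (min (cdist m (Sum.inr p) (Sum.inr q)) (cdist m (Sum.inr p) (Sum.inr r))) (cdist m (Sum.inr q) (Sum.inr r))
    have h2 := min_le_left (cdist m (Sum.inr p) (Sum.inr q)) (cdist m (Sum.inr p) (Sum.inr r))
    linarith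
  have h2pr : 2 * ε₀ ≤ cdist m (Sum.inr p) (Sum.inr r) := by
    rw [hε₀def]
    have h1 := min_le_left (min (cdist m (Sum.inr p) (Sum.inr q)) (cdist m (Sum.inr p) (Sum.inr r))) (cdist m (Sum.inr q) (Sum.inr r))
    have h2 := min_le_right (cdist m (Sum.inr p) (Sum.inr q)) (cdist m (Sum.inr p) (Sum.inr r))
    linarith
  have h2qr : 2 * ε₀ ≤ cdist m (Sum.inr q) (Sum.inr r) := by
    rw [hε₀def]
    have h1 := min_le_right (min (cdist m (Sum.inr p) (Sum.inr q)) (cdist m (Sum.inr p) (Sum.inr r))) (cdist m (Sum.inr q) (Sum.inr r))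
    linarith
  -- goal A for σ
  have Hσ : ∀ (γ : Γ) (w x : M), w ≠ x →
      |σ γ x - (G ((γ : M ≃ₜ M) w) ((γ : M ≃ₜ M) x) - G w x - σb γ w)| ≤ κ := by
    intro γ w x hwx
    have hc := hGPS.compat γ w x hwx
    have heq : σ γ x - (G ((γ : M ≃ₜ M) w) ((γ : M ≃ₜ M) x) - G w x - σb γ w)
        = σb γ w + σ γ x - (G ((γ : M ≃ₜ M) w) ((γ : M ≃ₜ M) x) - G w x) := by ring
    rw [heq]; exact hc
  have Aσ := goalA m hm hpq hpr hqr σ σb G κ hGPS.cocycle hGPS.locBounded Hσ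
  -- goal A for σb (with the flipped Gromov product)
  have hFflip : ∀ x y : M, x ≠ y → ∃ (U V : Set M) (B : ℝ),
      IsOpen U ∧ IsOpen V ∧ x ∈ U ∧ y ∈ V ∧
      ∀ x' ∈ U, ∀ y' ∈ V, x' ≠ y' → |(fun a b => G b a) x' y'| ≤ B := by
    intro x y hxy
    obtain ⟨U, V, B, hUo, hVo, hU, hV, hB⟩ := hGPS.locBounded y x (Ne.symm hxy)
    exact ⟨V, U, B, hVo, hUo, hV, hU, fun a ha b hb hab => hB b hb a ha (Ne.symm hab)⟩
  have Hσb : ∀ (γ : Γ) (w x : M), w ≠ x →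
      |σb γ x - ((fun a b => G b a) ((γ : M ≃ₜ M) w) ((γ : M ≃ₜ M) x)
        - (fun a b => G b a) w x - σ γ w)| ≤ κ := by
    intro γ w x hwx
    have hc := hGPS.compat γ x w (Ne.symm hwx)
    have heq : σb γ x - (G ((γ : M ≃ₜ M) x) ((γ : M ≃ₜ M) w) - G x w - σ γ w)
        = σb γ x + σ γ w - (G ((γ : M ≃ₜ M) x) ((γ : M ≃ₜ M) w) - G x w) := by ring
    show |σb γ x - (G ((γ : M ≃ₜ M) x) ((γ : M ≃ₜ M) w) - G x w - σ γ w)| ≤ κ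
    rw [heq]; exact hc
  have Aσb := goalA m hm hpq hpr hqr σb σ (fun a b => G b a) κ hGPS.cocycle_bar hFflip Hσb
  -- base points far from any γ⁻¹
  have hfar : ∀ g : Γ, ∃ x : M, ε₀ ≤ cdist m (Sum.inr x) (Sum.inl g⁻¹) := by
    intro g
    obtain ⟨x, -, -, -, -, hx1, -⟩ := exists_two_far m hε₀ h2pq h2pr h2qr (Sum.inl g⁻¹)
    exact ⟨x, hx1⟩
  -- expanding property, generic over the cocycle
  have expand : ∀ (τ : Γ → M → ℝ),
      (∀ ε > 0, ∃ C : ℝ, ∀ (γ : Γ) (x y : M),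
        ε ≤ cdist m (Sum.inr x) (Sum.inl γ⁻¹) → ε ≤ cdist m (Sum.inr y) (Sum.inl γ⁻¹) →
        |τ γ x - τ γ y| ≤ C) →
      IsProperCocycle m τ → ∃ hμ : Γ → ℝ, IsExpandingWith m τ hμ := by
    intro τ hA hprop
    refine ⟨fun g => τ g (Classical.choose (hfar g)), hprop, ?_⟩
    intro ε' hε'
    obtain ⟨C, hC⟩ := hA (min ε' ε₀) (lt_min hε' hε₀)
    refine ⟨max C 1, lt_of_lt_of_le one_pos (le_max_right _ _), fun g x hx => ?_⟩
    have hC' := hC g x (Classical.choose (hfar g))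
      (le_trans (min_le_left _ _) (le_of_lt hx))
      (le_trans (min_le_right _ _) (Classical.choose_spec (hfar g)))
    exact le_trans hC' (le_max_left _ _)
  refine ⟨expand σ Aσ hGPS.proper, expand σb Aσb hGPS.proper_bar, ?_⟩
  -- comparison of magnitudes
  intro h hb hex hexb
  obtain ⟨CB, hCB⟩ := goalB m hm hε₀ h2pq h2pr h2qr G hGPS.locBounded
  have hCB0 : 0 ≤ CB := by
    obtain ⟨x0, z0, -, hQ0⟩ := hCB 1
    exact le_trans (le_trans (abs_nonneg _) (le_max_left _ _)) hQ0
  obtain ⟨C_h, hCh0, hCh⟩ := hex.2 (ε₀ / 4) (by linarith)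
  obtain ⟨C_hb, hChb0, hChb⟩ := hexb.2 (ε₀ / 4) (by linarith)
  have hκ : 0 ≤ κ := hGPS.cocycle.nonneg
  refine ⟨C_h + C_hb + 3 * κ + 2 * CB + 1, by linarith, fun γ => ?_⟩
  obtain ⟨x, z, ⟨c1, c2, c3⟩, hQ⟩ := hCB γ
  have b1 : |G z ((γ : M ≃ₜ M) x)| ≤ CB := le_trans (le_max_left _ _) hQ
  have b2 : |G (((γ⁻¹ : Γ) : M ≃ₜ M) z) x| ≤ CB := le_trans (le_max_right _ _) hQ
  have e1 : |σ γ x - h γ| ≤ C_h := hCh γ x (lt_of_lt_of_le (by linarith) c1)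
  have e2 : |σb γ⁻¹ z - hb γ⁻¹| ≤ C_hb := by
    refine hChb γ⁻¹ z ?_
    rw [inv_inv]
    exact lt_of_lt_of_le (by linarith) c2
  -- cocycle relations
  have hb1κ : |σb 1 z| ≤ κ := by
    have hc := hGPS.cocycle_bar.cocycle 1 1 z
    rw [one_mul] at hc
    have h0 : σb 1 z - (σb 1 (((1 : Γ) : M ≃ₜ M) z) + σb 1 z) = -(σb 1 (((1 : Γ) : M ≃ₜ M) z)) := by ring
    rw [h0, abs_neg] at hc
    have : ((1 : Γ) : M ≃ₜ M) z = z := subgroup_one_apply z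
    rwa [this] at hc
  have hcoc : |σb 1 z - (σb γ (((γ⁻¹ : Γ) : M ≃ₜ M) z) + σb γ⁻¹ z)| ≤ κ := by
    have hc := hGPS.cocycle_bar.cocycle γ γ⁻¹ z
    rwa [mul_inv_cancel] at hc
  have hcp : |σb γ (((γ⁻¹ : Γ) : M ≃ₜ M) z) + σ γ x -
      (G z ((γ : M ≃ₜ M) x) - G (((γ⁻¹ : Γ) : M ≃ₜ M) z) x)| ≤ κ := by
    have hc := hGPS.compat γ (((γ⁻¹ : Γ) : M ≃ₜ M) z) x c3
    rwa [apply_inv_apply] at hc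
  rw [abs_le] at b1 b2 e1 e2 hb1κ hcoc hcp
  constructor <;> linarith
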